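/- arXiv:2512.08414 — 2 statements merged into one kernel-verified Lean document; each statement's English description precedes it below -/
import Mathlib

section
/- Let $k$ be a field of characteristic zero, and let $(R, \mathfrak{m})$ be a Noetherian local $k$-algebra with residue field $k$. Let $\varphi$ be a $k$-algebra automorphism of $R$ of finite order such that the induced map on $\mathfrak{m}/\mathfrak{m}^2$ is the identity. Then $\varphi = \mathrm{id}_R$. -/
section Aux

open IsLocalRing

variable {k R : Type*} [Field k] [CommRing R] [IsLocalRing R] [Algebra k R]

/-- An algebra automorphism preserves the maximal ideal. -/
lemma aux_mem_max (φ : R ≃ₐ[k] R) {x : R} (hx : x ∈ maximalIdeal R) :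
    φ x ∈ maximalIdeal R := by
  rw [mem_maximalIdeal] at hx ⊢
  intro h
  exact hx (by simpa using h.map φ.symm.toAlgHom.toRingHom)

/-- Decomposition `x = algebraMap c + m` when the residue field is `k`. -/
lemma aux_decomp (hres : Function.Bijective (algebraMap k (ResidueField R))) (x : R) :
    ∃ c : k, x - algebraMap k R c ∈ maximalIdeal R := by
  obtain ⟨c, hc⟩ := hres.surjective (residue R x)
  refine ⟨c, ?_⟩
  have : residue R (x - algebraMap k R c) = 0 := by
    rw [map_sub, ← hc, sub_eq_zero]; rfl
  exact Ideal.Quotient.eq_zero_iff_mem.mp this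

/-- Key induction: `φ x - x ∈ 𝔪^(n+1)` for `x ∈ 𝔪^n`. -/
lemma aux_step (hres : Function.Bijective (algebraMap k (ResidueField R)))
    (φ : R ≃ₐ[k] R)
    (hid : ∀ x ∈ maximalIdeal R, φ x - x ∈ maximalIdeal R ^ 2) :
    ∀ n : ℕ, ∀ x ∈ maximalIdeal R ^ n, φ x - x ∈ maximalIdeal R ^ (n + 1) := by
  intro n
  induction n with
  | zero =>
    intro x _
    obtain ⟨c, hc⟩ := aux_decomp hres x
    have h1 : φ (x - algebraMap k R c) ∈ maximalIdeal R := aux_mem_max φ hc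
    have : φ x - x = φ (x - algebraMap k R c) - (x - algebraMap k R c) := by
      rw [map_sub, AlgEquiv.commutes]; ring
    rw [this, pow_one]
    exact sub_mem h1 hc
  | succ n ih =>
    intro x hx
    rw [pow_succ] at hx
    refine Submodule.mul_induction_on hx ?_ ?_
    · intro a ha b hb
      have h1 : φ a - a ∈ maximalIdeal R ^ (n + 1) := ih a ha
      have h2 : φ b - b ∈ maximalIdeal R ^ 2 := hid b hb
      have h3 : φ b ∈ maximalIdeal R := aux_mem_max φ hb
      have key : φ (a * b) - a * b = (φ a - a) * φ b + a * (φ b - b) := by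
        rw [map_mul]; ring
      rw [key]
      refine add_mem ?_ ?_
      · have := Ideal.mul_mem_mul h1 h3
        rwa [← pow_succ] at this
      · have := Ideal.mul_mem_mul ha h2
        rwa [← pow_add] at this
    · intro a b ha hb
      have : φ (a + b) - (a + b) = (φ a - a) + (φ b - b) := by
        rw [map_add]; ring
      rw [this]; exact add_mem ha hb

/-- `φ` preserves `𝔪^n`. -/
lemma aux_pow_mem (hres : Function.Bijective (algebraMap k (ResidueField R)))
    (φ : R ≃ₐ[k] R)
    (hid : ∀ x ∈ maximalIdeal R, φ x - x ∈ maximalIdeal R ^ 2)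
    (n : ℕ) {x : R} (hx : x ∈ maximalIdeal R ^ n) : φ x ∈ maximalIdeal R ^ n := by
  have h1 := aux_step hres φ hid n x hx
  have h2 : maximalIdeal R ^ (n + 1) ≤ maximalIdeal R ^ n :=
    Ideal.pow_le_pow_right (Nat.le_succ n)
  have : φ x = (φ x - x) + x := by ring
  rw [this]; exact add_mem (h2 h1) hx

/-- Iterates of `φ` preserve `𝔪^n`. -/
lemma aux_iter_pow_mem (hres : Function.Bijective (algebraMap k (ResidueField R)))
    (φ : R ≃ₐ[k] R)
    (hid : ∀ x ∈ maximalIdeal R, φ x - x ∈ maximalIdeal R ^ 2)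
    (t n : ℕ) {x : R} (hx : x ∈ maximalIdeal R ^ n) : (φ ^ t) x ∈ maximalIdeal R ^ n := by
  induction t with
  | zero => simpa using hx
  | succ t ih =>
    have : φ ^ (t + 1) = φ * φ ^ t := by rw [pow_succ']
    rw [this, AlgEquiv.mul_apply]
    exact aux_pow_mem hres φ hid n ih

omit [IsLocalRing R] in
/-- Telescoping: `φ^m x - x = ∑_{t<m} φ^t (φ x - x)`. -/
lemma aux_telescope (φ : R ≃ₐ[k] R) (m : ℕ) (x : R) :
    (φ ^ m) x - x = ∑ t ∈ Finset.range m, (φ ^ t) (φ x - x) := by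
  induction m with
  | zero => simp
  | succ m ih =>
    rw [Finset.sum_range_succ, ← ih]
    have h1 : φ ^ (m + 1) = φ ^ m * φ := pow_succ φ m
    rw [h1, AlgEquiv.mul_apply, map_sub]
    ring

end Aux

/-- A finite-order `k`-algebra automorphism of a Noetherian local `k`-algebra with residue
field `k` (char `k = 0`) inducing the identity on `𝔪/𝔪²` is the identity. -/
theorem stmt2 (k R : Type*) [Field k] [CharZero k] [CommRing R] [IsNoetherianRing R]
    [IsLocalRing R] [Algebra k R]
    (hres : Function.Bijective (algebraMap k (IsLocalRing.ResidueField R)))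
    (φ : R ≃ₐ[k] R) (hfin : IsOfFinOrder φ)
    (hid : ∀ x ∈ IsLocalRing.maximalIdeal R, φ x - x ∈ IsLocalRing.maximalIdeal R ^ 2) :
    φ = AlgEquiv.refl := by
  open IsLocalRing in
  set M := maximalIdeal R with hM
  -- N = order of φ
  set N := orderOf φ with hN
  have hNpos : 0 < N := hfin.orderOf_pos
  have hφN : φ ^ N = 1 := pow_orderOf_eq_one φ
  -- (N : R) is a unit
  have hNunit : IsUnit (N : R) := by
    by_contra h
    have hmem : (N : R) ∈ maximalIdeal R :=
      (mem_maximalIdeal _).mpr (mem_nonunits_iff.mpr h)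
    have h0 : residue R (N : R) = 0 := Ideal.Quotient.eq_zero_iff_mem.mpr hmem
    rw [map_natCast] at h0
    have h1 : algebraMap k (ResidueField R) (N : k) = 0 := by rw [map_natCast]; exact h0
    have h2 : (N : k) = 0 := hres.injective (by simpa using h1)
    exact hNpos.ne' (by exact_mod_cast h2)
  -- for x ∈ M, φ x - x ∈ M ^ j for all j
  have key : ∀ x ∈ M, ∀ j : ℕ, φ x - x ∈ M ^ j := by
    intro x hx j
    induction j with
    | zero => simp
    | succ j ih =>
      rcases Nat.eq_zero_or_pos j with hj | hj
      · subst hj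
        rw [pow_one]
        exact sub_mem (aux_mem_max φ hx) hx
      set y := φ x - x with hy
      -- φ^t y - y ∈ M^(j+1)
      have hty : ∀ t : ℕ, (φ ^ t) y - y ∈ M ^ (j + 1) := by
        intro t
        rw [aux_telescope φ t y]
        refine Submodule.sum_mem _ fun s _ => ?_
        exact aux_iter_pow_mem hres φ hid s (j + 1) (aux_step hres φ hid j y ih)
      -- sum over t < N of φ^t y = φ^N x - x = 0
      have hsum : ∑ t ∈ Finset.range N, (φ ^ t) y = 0 := by
        rw [← aux_telescope φ N x, hφN]
        simp
      have hNy : (N : R) * y ∈ M ^ (j + 1) := by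
        have h1 : ∑ t ∈ Finset.range N, ((φ ^ t) y - y) ∈ M ^ (j + 1) :=
          Submodule.sum_mem _ fun t _ => hty t
        have h2 : ∑ t ∈ Finset.range N, ((φ ^ t) y - y)
            = (∑ t ∈ Finset.range N, (φ ^ t) y) - N • y := by
          rw [Finset.sum_sub_distrib, Finset.sum_const, Finset.card_range]
        rw [h2, hsum, zero_sub, nsmul_eq_mul] at h1
        simpa using (neg_mem_iff.mp h1)
      obtain ⟨u, hu⟩ := hNunit
      have : y = (↑u⁻¹ : R) * ((N : R) * y) := by
        rw [← mul_assoc, ← hu, Units.inv_mul, one_mul]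
      rw [this]
      exact Ideal.mul_mem_left _ _ hNy
  -- conclude
  have hKrull : (⨅ j : ℕ, M ^ j) = ⊥ :=
    Ideal.iInf_pow_eq_bot_of_isLocalRing M (maximalIdeal.isMaximal R).ne_top
  have hfix : ∀ x ∈ M, φ x = x := by
    intro x hx
    have : φ x - x ∈ ⨅ j : ℕ, M ^ j := Submodule.mem_iInf _ |>.mpr (key x hx)
    rw [hKrull] at this
    exact sub_eq_zero.mp ((Submodule.mem_bot R).mp this)
  ext x
  obtain ⟨c, hc⟩ := aux_decomp hres x
  have h1 : φ (x - algebraMap k R c) = x - algebraMap k R c := hfix _ hc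
  have h2 : φ x - algebraMap k R c = x - algebraMap k R c := by
    rw [← h1, map_sub, AlgEquiv.commutes]
  simpa using sub_left_inj.mp h2
end

section
/- Let $k$ be an algebraically closed field of characteristic zero, let $n \geq 1$ and $a_1, \ldots, a_n \geq 1$ be integers, and let $(\lambda_1, \ldots, \lambda_n), (\mu_1, \ldots, \mu_n) \in k^n \setminus \{0\}$. The following are equivalent: (a) there exists $z \in k^\times$ such that $z^{\bar{a}/a_i} \lambda_i = \mu_i$ for all $i$, where $\bar{a} = \mathrm{lcm}(a_1, \ldots, a_n)$; (b) for all $i, j$, writing $d = \gcd(a_i, a_j)$, one has $\mu_j^{a_j/d} \lambda_i^{a_i/d} = \mu_i^{a_i/d} \lambda_j^{a_j/d}$. -/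
private lemma aux_div_mul_div {L m d : ℕ} (hm : 0 < m) (hdm : d ∣ m) (hmL : m ∣ L) :
    L / m * (m / d) = L / d := by
  rcases Nat.eq_zero_or_pos d with rfl | hd
  · simp at hdm; omega
  obtain ⟨c, rfl⟩ := hmL
  obtain ⟨e, rfl⟩ := hdm
  rw [Nat.mul_div_cancel_left c hm, Nat.mul_div_cancel_left e hd,
    Nat.mul_assoc, Nat.mul_div_cancel_left _ hd, Nat.mul_comm]

private lemma aux_gcd_lcm_distrib {x y b : ℕ} (hx : x ≠ 0) (hy : y ≠ 0) (hb : b ≠ 0) :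
    Nat.gcd (Nat.lcm x y) b = Nat.lcm (Nat.gcd x b) (Nat.gcd y b) := by
  have hxy : Nat.lcm x y ≠ 0 := Nat.lcm_ne_zero hx hy
  have hxb : Nat.gcd x b ≠ 0 := fun h => hx (Nat.gcd_eq_zero_iff.1 h).1
  have hyb : Nat.gcd y b ≠ 0 := fun h => hy (Nat.gcd_eq_zero_iff.1 h).1
  have h1 : Nat.gcd (Nat.lcm x y) b ≠ 0 := fun h => hxy (Nat.gcd_eq_zero_iff.1 h).1
  have h2 : Nat.lcm (Nat.gcd x b) (Nat.gcd y b) ≠ 0 := Nat.lcm_ne_zero hxb hyb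
  refine Nat.eq_of_factorization_eq h1 h2 fun p => ?_
  rw [Nat.factorization_gcd hxy hb, Nat.factorization_lcm hx hy,
    Nat.factorization_lcm hxb hyb, Nat.factorization_gcd hx hb, Nat.factorization_gcd hy hb]
  simp only [Finsupp.inf_apply, Finsupp.sup_apply]
  exact min_max_distrib_right _ _ _

private lemma aux_finset_lcm_pos {ι : Type*} (T : Finset ι) (a : ι → ℕ)
    (h : ∀ i ∈ T, a i ≠ 0) : T.lcm a ≠ 0 := by
  classical
  induction T using Finset.induction_on with
  | empty => simp [Finset.lcm_empty]
  | @insert j T hj ih =>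
    rw [Finset.lcm_insert]
    rw [lcm_eq_nat_lcm]
    exact Nat.lcm_ne_zero (h j (Finset.mem_insert_self j T))
      (ih fun i hi => h i (Finset.mem_insert_of_mem hi))

private lemma aux_gcd_finset_lcm {ι : Type*} (T : Finset ι) (a : ι → ℕ) (b : ℕ)
    (h : ∀ i ∈ T, a i ≠ 0) (hb : b ≠ 0) :
    Nat.gcd (T.lcm a) b = T.lcm fun i => Nat.gcd (a i) b := by
  classical
  induction T using Finset.induction_on with
  | empty => simp [Finset.lcm_empty, Nat.gcd_one_left]
  | @insert j T hj ih =>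
    rw [Finset.lcm_insert, Finset.lcm_insert, lcm_eq_nat_lcm, lcm_eq_nat_lcm,
      aux_gcd_lcm_distrib (h j (Finset.mem_insert_self j T))
        (aux_finset_lcm_pos T a fun i hi => h i (Finset.mem_insert_of_mem hi)) hb,
      ih fun i hi => h i (Finset.mem_insert_of_mem hi)]

private lemma aux_merge {k : Type*} [Field k] [IsAlgClosed k] {u v : k} (hu : u ≠ 0) (hv : v ≠ 0)
    {M N : ℕ} (hM : 0 < M) (hN : 0 < N)
    (h : u ^ (M / Nat.gcd M N) = v ^ (N / Nat.gcd M N)) :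
    ∃ w : k, w ≠ 0 ∧ w ^ (Nat.lcm M N / M) = u ∧ w ^ (Nat.lcm M N / N) = v := by
  set d := Nat.gcd M N with hd'
  set L := Nat.lcm M N with hL'
  have hd : 0 < d := Nat.gcd_pos_of_pos_left N hM
  have hLd : L * d = M * N := by rw [mul_comm, hd', hL']; exact Nat.gcd_mul_lcm M N
  have hML : M ∣ L := Nat.dvd_lcm_left M N
  have hNL : N ∣ L := Nat.dvd_lcm_right M N
  have hLM : L / M = N / d := by
    have h1 : M * (L / M) = L := Nat.mul_div_cancel' hML
    have h2 : L / M * d = N := by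
      have : M * (L / M * d) = M * N := by rw [← mul_assoc, h1, hLd]
      exact Nat.eq_of_mul_eq_mul_left hM this
    rw [← h2, Nat.mul_div_cancel _ hd]
  have hLN : L / N = M / d := by
    have h1 : N * (L / N) = L := Nat.mul_div_cancel' hNL
    have h2 : L / N * d = M := by
      have : N * (L / N * d) = N * M := by rw [← mul_assoc, h1, hLd, mul_comm]
      exact Nat.eq_of_mul_eq_mul_left hN this
    rw [← h2, Nat.mul_div_cancel _ hd]
  have hNd : 0 < N / d := Nat.div_pos (Nat.le_of_dvd hN (Nat.gcd_dvd_right M N)) hd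
  have hMd : 0 < M / d := Nat.div_pos (Nat.le_of_dvd hM (Nat.gcd_dvd_left M N)) hd
  obtain ⟨w₀, hw₀⟩ := IsAlgClosed.exists_pow_nat_eq u (n := L / M) (by rw [hLM]; exact hNd)
  have hw₀0 : w₀ ≠ 0 := by
    rintro rfl
    rw [zero_pow (by rw [hLM]; omega)] at hw₀
    exact hu hw₀.symm
  set η := v / w₀ ^ (L / N) with hη'
  have hη0 : η ≠ 0 := div_ne_zero hv (pow_ne_zero _ hw₀0)
  have key : (w₀ ^ (L / N)) ^ (N / d) = v ^ (N / d) := by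
    rw [← pow_mul, hLN, mul_comm, ← hLM, pow_mul, hw₀, hLM, h]
  have hηpow : η ^ (N / d) = 1 := by
    rw [hη', div_pow, key, div_self (pow_ne_zero _ hv)]
  -- Bezout
  have cop : Nat.Coprime (M / d) (N / d) := Nat.coprime_div_gcd_div_gcd hd
  have bez : ((M / d : ℕ) : ℤ) * Nat.gcdA (M / d) (N / d)
      + ((N / d : ℕ) : ℤ) * Nat.gcdB (M / d) (N / d) = 1 := by
    have := Nat.gcd_eq_gcd_ab (M / d) (N / d)
    rw [cop] at this
    exact_mod_cast this.symm
  set A := Nat.gcdA (M / d) (N / d)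
  set B := Nat.gcdB (M / d) (N / d)
  set t := η ^ A with ht'
  have ht0 : t ≠ 0 := zpow_ne_zero _ hη0
  have hηz : η ^ ((N / d : ℕ) : ℤ) = 1 := by rw [zpow_natCast, hηpow]
  have ht1 : t ^ (N / d) = 1 := by
    rw [ht', ← zpow_natCast (η ^ A) (N / d), ← zpow_mul, mul_comm, zpow_mul, hηz, one_zpow]
  have ht2 : t ^ (M / d) = η := by
    rw [ht', ← zpow_natCast (η ^ A) (M / d), ← zpow_mul]
    have : A * ((M / d : ℕ) : ℤ) = 1 - ((N / d : ℕ) : ℤ) * B := by linarith [bez]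
    rw [this, zpow_sub₀ hη0, zpow_one, zpow_mul, hηz, one_zpow, div_one]
  refine ⟨w₀ * t, mul_ne_zero hw₀0 ht0, ?_, ?_⟩
  · rw [mul_pow, hw₀, hLM, ht1, mul_one]
  · rw [mul_pow, hLN, ht2, ← hLN, hη', mul_div_cancel₀ _ (pow_ne_zero _ hw₀0)]

/-- Two nonzero vectors `λ, μ ∈ kⁿ` are related by `μᵢ = z^{ā/aᵢ} λᵢ` for some `z ∈ k^×`
(`ā = lcm(a₁,…,aₙ)`) iff the cross-power relations
`μⱼ^{aⱼ/d} λᵢ^{aᵢ/d} = μᵢ^{aᵢ/d} λⱼ^{aⱼ/d}` hold for all `i, j` with `d = gcd(aᵢ, aⱼ)`. -/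
theorem stmt5 (k : Type*) [Field k] [IsAlgClosed k] [CharZero k]
    (n : ℕ) (hn : 1 ≤ n) (a : Fin n → ℕ) (ha : ∀ i, 1 ≤ a i)
    (lam mu : Fin n → k) (hlam : lam ≠ 0) (hmu : mu ≠ 0) :
    (∃ z : k, z ≠ 0 ∧ ∀ i, z ^ (Finset.univ.lcm a / a i) * lam i = mu i) ↔
      ∀ i j,
        mu j ^ (a j / Nat.gcd (a i) (a j)) * lam i ^ (a i / Nat.gcd (a i) (a j)) =
          mu i ^ (a i / Nat.gcd (a i) (a j)) * lam j ^ (a j / Nat.gcd (a i) (a j)) := by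
  classical
  have haz : ∀ i, a i ≠ 0 := fun i => by have := ha i; omega
  have hap : ∀ i, 0 < a i := fun i => ha i
  set A := Finset.univ.lcm a with hA'
  have hAdvd : ∀ i, a i ∣ A := fun i => Finset.dvd_lcm (Finset.mem_univ i)
  have hA0 : A ≠ 0 := aux_finset_lcm_pos _ _ fun i _ => haz i
  have hgpos : ∀ i j : Fin n, 0 < Nat.gcd (a i) (a j) :=
    fun i j => Nat.gcd_pos_of_pos_left _ (hap i)
  have hqpos : ∀ i j : Fin n, 0 < a i / Nat.gcd (a i) (a j) := fun i j =>
    Nat.div_pos (Nat.le_of_dvd (hap i) (Nat.gcd_dvd_left _ _)) (hgpos i j)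
  constructor
  · rintro ⟨z, hz, hzz⟩ i j
    set d := Nat.gcd (a i) (a j) with hd'
    have e1 : (z ^ (A / a j)) ^ (a j / d) = z ^ (A / d) := by
      rw [← pow_mul, aux_div_mul_div (hap j) (Nat.gcd_dvd_right _ _) (hAdvd j)]
    have e2 : (z ^ (A / a i)) ^ (a i / d) = z ^ (A / d) := by
      rw [← pow_mul, aux_div_mul_div (hap i) (Nat.gcd_dvd_left _ _) (hAdvd i)]
    rw [← hzz i, ← hzz j, mul_pow, mul_pow, e1, e2]
    ring
  · intro h
    -- support equality
    have hsup : ∀ i, lam i = 0 ↔ mu i = 0 := by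
      intro i
      constructor
      · intro hl
        by_contra hm
        apply hlam
        funext j
        have hij := h i j
        rw [hl, zero_pow (hqpos i j).ne', mul_zero] at hij
        have := (mul_eq_zero.1 hij.symm).resolve_left (pow_ne_zero _ hm)
        simp only [Pi.zero_apply]
        exact pow_eq_zero_iff
          (Nat.div_pos (Nat.le_of_dvd (hap j) (Nat.gcd_dvd_right _ _)) (hgpos i j)).ne' |>.1 this
      · intro hm
        by_contra hl
        apply hmu
        funext j
        have hij := h j i
        rw [hm, zero_pow (Nat.div_pos (Nat.le_of_dvd (hap i)
          (Nat.gcd_dvd_right _ _)) (hgpos j i)).ne', zero_mul] at hij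
        have := (mul_eq_zero.1 hij.symm).resolve_right (pow_ne_zero _ hl)
        simp only [Pi.zero_apply]
        exact pow_eq_zero_iff
          (Nat.div_pos (Nat.le_of_dvd (hap j) (Nat.gcd_dvd_left _ _)) (hgpos j i)).ne' |>.1 this
    have main : ∀ T : Finset (Fin n), (∀ i ∈ T, lam i ≠ 0) →
        ∃ z : k, z ≠ 0 ∧ ∀ i ∈ T, z ^ (T.lcm a / a i) * lam i = mu i := by
      intro T
      induction T using Finset.induction_on with
      | empty => exact fun _ => ⟨1, one_ne_zero, by simp⟩
      | @insert j T hj ih =>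
        intro hT
        have hTl : ∀ i ∈ T, lam i ≠ 0 := fun i hi => hT i (Finset.mem_insert_of_mem hi)
        obtain ⟨z, hz0, hz⟩ := ih hTl
        have hlj : lam j ≠ 0 := hT j (Finset.mem_insert_self _ _)
        have hmj : mu j ≠ 0 := fun hmj0 => hlj ((hsup j).2 hmj0)
        set r := mu j / lam j with hr'
        have hr0 : r ≠ 0 := div_ne_zero hmj hlj
        rcases T.eq_empty_or_nonempty with rfl | hTne
        · refine ⟨r, hr0, ?_⟩
          intro i hi
          simp only [Finset.mem_insert, Finset.notMem_empty, or_false] at hi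
          subst hi
          rw [Finset.lcm_insert, Finset.lcm_empty, lcm_eq_nat_lcm, Nat.lcm_one_right,
            Nat.div_self (hap i), pow_one, hr', div_mul_cancel₀ _ hlj]
        · set L := T.lcm a with hL'
          have hL0 : L ≠ 0 := aux_finset_lcm_pos T a fun i _ => haz i
          have hLpos : 0 < L := Nat.pos_of_ne_zero hL0
          have haL : ∀ i ∈ T, a i ∣ L := fun i hi => Finset.dvd_lcm hi
          set D := Nat.gcd L (a j) with hD'
          have hDL : D ∣ L := Nat.gcd_dvd_left _ _
          have hDj : D ∣ a j := Nat.gcd_dvd_right _ _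
          have hD0 : 0 < D := Nat.gcd_pos_of_pos_left _ hLpos
          have compat : z ^ (L / D) = r ^ (a j / D) := by
            set t := z ^ (L / D) / r ^ (a j / D) with ht'
            have hrfact : ∀ i ∈ T, z ^ (L / a i) = mu i / lam i := by
              intro i hi
              rw [eq_div_iff (hTl i hi), hz i hi]
            have hstep : ∀ i ∈ T, t ^ (D / Nat.gcd (a i) (a j)) = 1 := by
              intro i hi
              set d := Nat.gcd (a i) (a j) with hd'
              have hdi : d ∣ a i := Nat.gcd_dvd_left _ _
              have hdj : d ∣ a j := Nat.gcd_dvd_right _ _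
              have hdD : d ∣ D := Nat.dvd_gcd (hdi.trans (haL i hi)) hdj
              have hri : (mu i / lam i) ^ (a i / d) = r ^ (a j / d) := by
                rw [hr', div_pow, div_pow, div_eq_div_iff (pow_ne_zero _ (hTl i hi))
                  (pow_ne_zero _ hlj)]
                linear_combination -h i j
              have hzL : z ^ (L / d) = r ^ (a j / d) := by
                rw [← aux_div_mul_div (hap i) hdi (haL i hi), pow_mul, hrfact i hi, hri]
              rw [ht', div_pow, ← pow_mul, ← pow_mul,
                aux_div_mul_div hD0 hdD hDL,
                aux_div_mul_div hD0 hdD hDj, hzL, div_self (pow_ne_zero _ hr0)]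
            have ht0 : t ≠ 0 := div_ne_zero (pow_ne_zero _ hz0) (pow_ne_zero _ hr0)
            obtain ⟨i₀, hi₀⟩ := hTne
            have hDdpos : ∀ i ∈ T, 0 < D / Nat.gcd (a i) (a j) := by
              intro i hi
              exact Nat.div_pos (Nat.le_of_dvd hD0
                (Nat.dvd_gcd ((Nat.gcd_dvd_left _ _).trans (haL i hi)) (Nat.gcd_dvd_right _ _)))
                (hgpos i j)
            have hfin : IsOfFinOrder t :=
              isOfFinOrder_iff_pow_eq_one.2 ⟨_, hDdpos i₀ hi₀, hstep i₀ hi₀⟩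
            set e := orderOf t with he'
            have hepos : 0 < e := orderOf_pos_iff.2 hfin
            have heD : e ∣ D :=
              ((orderOf_dvd_of_pow_eq_one (hstep i₀ hi₀)).trans
                (Nat.div_dvd_of_dvd (Nat.dvd_gcd ((Nat.gcd_dvd_left _ _).trans (haL i₀ hi₀))
                  (Nat.gcd_dvd_right _ _))))
            have hdvd : ∀ i ∈ T, Nat.gcd (a i) (a j) ∣ D / e := by
              intro i hi
              have hdD : Nat.gcd (a i) (a j) ∣ D :=
                Nat.dvd_gcd ((Nat.gcd_dvd_left _ _).trans (haL i hi)) (Nat.gcd_dvd_right _ _)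
              obtain ⟨c, hc⟩ := orderOf_dvd_of_pow_eq_one (hstep i hi)
              have hDeq : D = Nat.gcd (a i) (a j) * (e * c) := by
                rw [← hc, Nat.mul_div_cancel' hdD]
              refine ⟨c, ?_⟩
              rw [hDeq, mul_comm e c, ← mul_assoc, Nat.mul_div_cancel _ hepos]
            have hDlcm : D = T.lcm fun i => Nat.gcd (a i) (a j) := by
              rw [hD', hL', aux_gcd_finset_lcm T a (a j) (fun i _ => haz i) (haz j)]
            have hDdvd : D ∣ D / e := by
              conv_lhs => rw [hDlcm]
              exact Finset.lcm_dvd fun i hi => hdvd i hi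
            have hDe : D / e = D := Nat.dvd_antisymm (Nat.div_dvd_of_dvd heD) hDdvd
            have he1 : e = 1 := by
              have h1 : D / e * e = D := Nat.div_mul_cancel heD
              rw [hDe] at h1
              have : D * e = D * 1 := by rw [mul_one]; exact h1
              exact Nat.eq_of_mul_eq_mul_left hD0 this
            have : t = 1 := orderOf_eq_one_iff.1 he1
            rw [ht'] at this
            exact (div_eq_one_iff_eq (pow_ne_zero _ hr0)).1 this
          obtain ⟨w, hw0, hw1, hw2⟩ := aux_merge hz0 hr0 hLpos (hap j) compat
          refine ⟨w, hw0, ?_⟩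
          intro i hi
          rw [Finset.lcm_insert, lcm_eq_nat_lcm, Nat.lcm_comm]
          rcases Finset.mem_insert.1 hi with rfl | hiT
          · rw [hw2, hr', div_mul_cancel₀ _ hlj]
          · rw [show Nat.lcm L (a j) / a i =
                Nat.lcm L (a j) / L * (L / a i) from
              (aux_div_mul_div hLpos (haL i hiT) (Nat.dvd_lcm_left L (a j))).symm,
              pow_mul, hw1, hz i hiT]
    have hS : ∀ i ∈ Finset.univ.filter (fun i => lam i ≠ 0), lam i ≠ 0 := by
      intro i hi
      exact (Finset.mem_filter.1 hi).2
    obtain ⟨z, hz0, hz⟩ := main _ hS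
    set S := Finset.univ.filter (fun i => lam i ≠ 0) with hS'
    set LS := S.lcm a with hLS'
    have hLS0 : 0 < LS := Nat.pos_of_ne_zero (aux_finset_lcm_pos S a fun i _ => haz i)
    have hLSA : LS ∣ A := Finset.lcm_dvd fun i _ => hAdvd i
    obtain ⟨w, hw⟩ := IsAlgClosed.exists_pow_nat_eq z (n := A / LS)
      (Nat.div_pos (Nat.le_of_dvd (Nat.pos_of_ne_zero hA0) hLSA) hLS0)
    have hw0 : w ≠ 0 := by
      rintro rfl
      rw [zero_pow (Nat.div_pos (Nat.le_of_dvd (Nat.pos_of_ne_zero hA0) hLSA) hLS0).ne'] at hw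
      exact hz0 hw.symm
    refine ⟨w, hw0, fun i => ?_⟩
    by_cases hli : lam i = 0
    · rw [hli, mul_zero, ((hsup i).1 hli).symm]
    · have hiS : i ∈ S := Finset.mem_filter.2 ⟨Finset.mem_univ i, hli⟩
      have hiLS : a i ∣ LS := Finset.dvd_lcm hiS
      rw [← aux_div_mul_div hLS0 hiLS hLSA, pow_mul, hw, hz i hiS]
end
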